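/- Let g(f) = (1/(1−β)) ∫_{−z_{1−β}}^∞ Φ((u + c)/√(1/f − 1))^K φ(u) du with c = z_{1−α} + z_{1−β} denote the maximized consistency probability with all regional fractions equal to f = 1/K. Then g(1/K), viewed as a function of the integer K ≥ 2, is strictly decreasing in K. -/

import Mathlib

open MeasureTheory

/-- Standard normal density. -/
noncomputable def stdNormalPdf (t : ℝ) : ℝ :=
  (Real.sqrt (2 * Real.pi))⁻¹ * Real.exp (-(t ^ 2) / 2)

/-- Standard normal cumulative distribution function. -/
noncomputable def stdNormalCdf (x : ℝ) : ℝ := ∫ t in Set.Iic x, stdNormalPdf t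

open Set Real

section StdNormalAux

lemma sqrt2pi_pos : 0 < Real.sqrt (2 * Real.pi) :=
  Real.sqrt_pos.2 (by positivity)

lemma pdf_pos (t : ℝ) : 0 < stdNormalPdf t :=
  mul_pos (inv_pos.2 sqrt2pi_pos) (Real.exp_pos _)

lemma pdf_nonneg (t : ℝ) : 0 ≤ stdNormalPdf t := (pdf_pos t).le

lemma pdf_neg (t : ℝ) : stdNormalPdf (-t) = stdNormalPdf t := by
  simp [stdNormalPdf]

lemma pdf_le {s t : ℝ} (h : s ^ 2 ≤ t ^ 2) : stdNormalPdf t ≤ stdNormalPdf s := by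
  unfold stdNormalPdf
  have h2 : Real.exp (-(t ^ 2) / 2) ≤ Real.exp (-(s ^ 2) / 2) :=
    Real.exp_le_exp.2 (by linarith)
  exact mul_le_mul_of_nonneg_left h2 (inv_nonneg.2 (Real.sqrt_nonneg _))

lemma pdf_meas : Measurable stdNormalPdf := by
  unfold stdNormalPdf; fun_prop

lemma pdf_integrable : Integrable stdNormalPdf := by
  have h : Integrable (fun t : ℝ => Real.exp (-(1/2 : ℝ) * t ^ 2)) :=
    integrable_exp_neg_mul_sq (by norm_num)
  have h2 := h.const_mul (Real.sqrt (2 * Real.pi))⁻¹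
  refine h2.congr (Filter.Eventually.of_forall fun t => ?_)
  unfold stdNormalPdf
  ring_nf

lemma pdf_integral : ∫ t, stdNormalPdf t = 1 := by
  unfold stdNormalPdf
  rw [integral_const_mul]
  have h : ∫ t : ℝ, Real.exp (-(t ^ 2) / 2) = Real.sqrt (2 * Real.pi) := by
    have h2 := integral_gaussian (1/2 : ℝ)
    have h3 : ∀ t : ℝ, -(1/2 : ℝ) * t ^ 2 = -(t ^ 2) / 2 := fun t => by ring
    simp only [h3] at h2
    rw [h2, show Real.pi / (1/2) = 2 * Real.pi by ring]
  rw [h, inv_mul_cancel₀ sqrt2pi_pos.ne']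

lemma cdf_mono : Monotone stdNormalCdf := fun x y h =>
  setIntegral_mono_set pdf_integrable.integrableOn
    (Filter.Eventually.of_forall pdf_nonneg)
    (HasSubset.Subset.eventuallyLE (Iic_subset_Iic.2 h))

lemma cdf_meas : Measurable stdNormalCdf := cdf_mono.measurable

lemma setIntegral_pdf_pos {s : Set ℝ} (h : 0 < volume s) :
    0 < ∫ t in s, stdNormalPdf t := by
  rw [setIntegral_pos_iff_support_of_nonneg_ae
    (Filter.Eventually.of_forall pdf_nonneg) pdf_integrable.integrableOn]
  have hs : Function.support stdNormalPdf = univ := by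
    ext t; simp [Function.mem_support, (pdf_pos t).ne']
  rw [hs, univ_inter]
  exact h

lemma cdf_add_compl (x : ℝ) : stdNormalCdf x + ∫ t in Ioi x, stdNormalPdf t = 1 := by
  have h := setIntegral_union (μ := volume) (f := stdNormalPdf)
    (Iic_disjoint_Ioi (le_refl x)) measurableSet_Ioi
    pdf_integrable.integrableOn pdf_integrable.integrableOn
  rw [Iic_union_Ioi, setIntegral_univ, pdf_integral] at h
  unfold stdNormalCdf
  linarith

lemma cdf_pos (x : ℝ) : 0 < stdNormalCdf x :=
  setIntegral_pdf_pos (by rw [Real.volume_Iic]; exact ENNReal.zero_lt_top)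

lemma cdf_lt_one (x : ℝ) : stdNormalCdf x < 1 := by
  have h1 := cdf_add_compl x
  have h2 : 0 < ∫ t in Ioi x, stdNormalPdf t :=
    setIntegral_pdf_pos (by rw [Real.volume_Ioi]; exact ENNReal.zero_lt_top)
  linarith

lemma cdf_neg_eq (x : ℝ) : stdNormalCdf (-x) = 1 - stdNormalCdf x := by
  have h1 : stdNormalCdf (-x) = ∫ t in Ioi x, stdNormalPdf t := by
    unfold stdNormalCdf
    calc ∫ t in Iic (-x), stdNormalPdf t = ∫ t in Iic (-x), stdNormalPdf (-t) := by
          simp only [pdf_neg]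
      _ = ∫ t in Ioi (-(-x)), stdNormalPdf t := integral_comp_neg_Iic _ _
      _ = ∫ t in Ioi x, stdNormalPdf t := by rw [neg_neg]
  have h2 := cdf_add_compl x
  linarith

lemma cdf_zero : stdNormalCdf 0 = 1/2 := by
  have h := cdf_neg_eq 0
  rw [neg_zero] at h
  linarith

lemma cdf_half_le {x : ℝ} (hx : 0 ≤ x) : 1/2 ≤ stdNormalCdf x := by
  have := cdf_mono hx
  rw [cdf_zero] at this
  exact this

lemma sum_pow_mono (K : ℕ) {p q : ℝ} (hq : 1/2 ≤ q) (hpq : q ≤ p) (hp : p ≤ 1) :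
    q ^ K + (1 - q) ^ K ≤ p ^ K + (1 - p) ^ K := by
  have h0p : (0:ℝ) ≤ 1 - p := by linarith
  have e1 : p ^ K - q ^ K = (∑ i ∈ Finset.range K, p ^ i * q ^ (K - 1 - i)) * (p - q) :=
    (geom_sum₂_mul p q K).symm
  have e2 : (1 - q) ^ K - (1 - p) ^ K
      = (∑ i ∈ Finset.range K, (1 - q) ^ i * (1 - p) ^ (K - 1 - i)) * (p - q) := by
    have h := geom_sum₂_mul (1 - q) (1 - p) K
    rw [show (1:ℝ) - q - (1 - p) = p - q by ring] at h
    exact h.symm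
  have hsum : (∑ i ∈ Finset.range K, (1 - q) ^ i * (1 - p) ^ (K - 1 - i))
      ≤ ∑ i ∈ Finset.range K, p ^ i * q ^ (K - 1 - i) := by
    refine Finset.sum_le_sum fun i _ => ?_
    have h1 : (1 - q) ^ i ≤ p ^ i := pow_le_pow_left₀ (by linarith) (by linarith) i
    have h2 : (1 - p) ^ (K - 1 - i) ≤ q ^ (K - 1 - i) :=
      pow_le_pow_left₀ h0p (by linarith) _
    exact mul_le_mul h1 h2 (pow_nonneg h0p _) (pow_nonneg (by linarith) _)
  have hmul := mul_le_mul_of_nonneg_right hsum (show (0:ℝ) ≤ p - q by linarith)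
  rw [← e1, ← e2] at hmul
  linarith

lemma integrableOn_mul_pdf {f : ℝ → ℝ} (hf : Measurable f) (hbd : ∀ x, |f x| ≤ 1)
    (s : Set ℝ) : IntegrableOn (fun u => f u * stdNormalPdf u) s volume := by
  refine Integrable.integrableOn (Integrable.mono' pdf_integrable
    ((hf.mul pdf_meas).aestronglyMeasurable) (Filter.Eventually.of_forall fun u => ?_))
  rw [Real.norm_eq_abs, abs_mul, abs_of_nonneg (pdf_nonneg u)]
  calc |f u| * stdNormalPdf u ≤ 1 * stdNormalPdf u :=
        mul_le_mul_of_nonneg_right (hbd u) (pdf_nonneg u)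
    _ = stdNormalPdf u := one_mul _

end StdNormalAux

/-- The maximal criterion-II consistency probability at equal regional fractions `f_k = 1/K`,
`M(K) = (1/(1-β)) ∫_{-z_{1-β}}^∞ Φ((u + c)/√(K-1))^K φ(u) du` with `c = z_{1-α} + z_{1-β}`,
is strictly decreasing in the integer `K ≥ 2`. -/
theorem stmt6 (α β zα zβ : ℝ)
    (hα : α ∈ Set.Ioo (0 : ℝ) 1) (hβ : β ∈ Set.Ioo (0 : ℝ) 1)
    (hzα : stdNormalCdf zα = 1 - α) (hzβ : stdNormalCdf zβ = 1 - β)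
    (hc : 0 < zα + zβ)
    (M : ℕ → ℝ)
    (hM : ∀ K : ℕ, M K = (1 / (1 - β)) * ∫ u in Set.Ioi (-zβ),
      (stdNormalCdf ((u + (zα + zβ)) / Real.sqrt ((K : ℝ) - 1))) ^ K * stdNormalPdf u) :
    ∀ K : ℕ, 2 ≤ K → M (K + 1) < M K := by
  intro K hK
  have hβ1 : (0:ℝ) < 1 - β := by linarith [hβ.2]
  set c : ℝ := zα + zβ with hcdef
  have hc0 : 0 < c := hc
  have hK2 : (2:ℝ) ≤ (K:ℝ) := by exact_mod_cast hK
  rw [hM K, hM (K+1)]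
  have hcast : ((K + 1 : ℕ) : ℝ) - 1 = (K : ℝ) := by push_cast; ring
  rw [hcast]
  refine mul_lt_mul_of_pos_left ?_ (by positivity : (0:ℝ) < 1 / (1 - β))
  set s1 : ℝ := Real.sqrt ((K:ℝ) - 1) with hs1def
  set s2 : ℝ := Real.sqrt (K:ℝ) with hs2def
  have hs1pos : 0 < s1 := Real.sqrt_pos.2 (by linarith)
  have hs2pos : 0 < s2 := Real.sqrt_pos.2 (by linarith)
  have hs12 : s1 ≤ s2 := Real.sqrt_le_sqrt (by linarith)
  -- cdf values in [0,1]
  have h01 : ∀ y : ℝ, 0 ≤ stdNormalCdf y := fun y => (cdf_pos y).le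
  have h11 : ∀ y : ℝ, stdNormalCdf y ≤ 1 := fun y => (cdf_lt_one y).le
  -- the two auxiliary integrands
  set g1 : ℝ → ℝ := fun u =>
    (stdNormalCdf ((u + c) / s1) ^ K - stdNormalCdf ((u + c) / s2) ^ K) * stdNormalPdf u
    with hg1def
  set g2 : ℝ → ℝ := fun u =>
    (stdNormalCdf ((u + c) / s2) ^ K * (1 - stdNormalCdf ((u + c) / s2))) * stdNormalPdf u
    with hg2def
  -- measurability of inner functions
  have hmeas1 : Measurable fun u : ℝ => stdNormalCdf ((u + c) / s1) :=
    cdf_meas.comp ((measurable_id.add_const c).div_const s1)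
  have hmeas2 : Measurable fun u : ℝ => stdNormalCdf ((u + c) / s2) :=
    cdf_meas.comp ((measurable_id.add_const c).div_const s2)
  -- integrability of everything on any set
  have hg1int : ∀ s : Set ℝ, IntegrableOn g1 s volume := by
    intro s
    refine integrableOn_mul_pdf ((hmeas1.pow_const K).sub (hmeas2.pow_const K)) (fun x => ?_) s
    show |stdNormalCdf ((x + c) / s1) ^ K - stdNormalCdf ((x + c) / s2) ^ K| ≤ 1
    rw [abs_sub_le_iff]
    constructor
    · have := pow_le_one₀ (h01 _) (h11 ((x + c) / s1)) (n := K)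
      have := pow_nonneg (h01 ((x + c) / s2)) K
      linarith
    · have := pow_le_one₀ (h01 _) (h11 ((x + c) / s2)) (n := K)
      have := pow_nonneg (h01 ((x + c) / s1)) K
      linarith
  have hg2int : ∀ s : Set ℝ, IntegrableOn g2 s volume := by
    intro s
    refine integrableOn_mul_pdf ((hmeas2.pow_const K).mul
      (measurable_const.sub hmeas2)) (fun x => ?_) s
    show |stdNormalCdf ((x + c) / s2) ^ K * (1 - stdNormalCdf ((x + c) / s2))| ≤ 1
    rw [abs_mul]
    have h1 : |stdNormalCdf ((x + c) / s2) ^ K| ≤ 1 := by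
      rw [abs_of_nonneg (pow_nonneg (h01 _) K)]
      exact pow_le_one₀ (h01 _) (h11 _)
    have h2 : |1 - stdNormalCdf ((x + c) / s2)| ≤ 1 := by
      rw [abs_of_nonneg (by linarith [h11 ((x + c) / s2)])]
      linarith [h01 ((x + c) / s2)]
    calc |stdNormalCdf ((x + c) / s2) ^ K| * |1 - stdNormalCdf ((x + c) / s2)|
        ≤ 1 * 1 := mul_le_mul h1 h2 (abs_nonneg _) zero_le_one
      _ = 1 := one_mul 1
  have hBint : ∀ s : Set ℝ, IntegrableOn
      (fun u => stdNormalCdf ((u + c) / s2) ^ (K + 1) * stdNormalPdf u) s volume := by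
    intro s
    refine integrableOn_mul_pdf (hmeas2.pow_const (K + 1)) (fun x => ?_) s
    rw [abs_of_nonneg (pow_nonneg (h01 _) _)]
    exact pow_le_one₀ (h01 _) (h11 _)
  -- pointwise facts
  have hdivle : ∀ x : ℝ, 0 ≤ x → x / s2 ≤ x / s1 := fun x hx =>
    div_le_div_of_nonneg_left hx hs1pos hs12
  have hDnonneg : ∀ x : ℝ, 0 ≤ x →
      0 ≤ stdNormalCdf (x / s1) ^ K - stdNormalCdf (x / s2) ^ K := by
    intro x hx
    have h := cdf_mono (hdivle x hx)
    have := pow_le_pow_left₀ (h01 (x / s2)) h K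
    linarith
  have hDneg : ∀ x : ℝ, 0 ≤ x →
      stdNormalCdf (-x / s1) ^ K - stdNormalCdf (-x / s2) ^ K ≤ 0 := by
    intro x hx
    have e1 : stdNormalCdf (-x / s1) = 1 - stdNormalCdf (x / s1) := by
      rw [show -x / s1 = -(x / s1) by ring, cdf_neg_eq]
    have e2 : stdNormalCdf (-x / s2) = 1 - stdNormalCdf (x / s2) := by
      rw [show -x / s2 = -(x / s2) by ring, cdf_neg_eq]
    rw [e1, e2]
    have h := cdf_mono (hdivle x hx)
    have := pow_le_pow_left₀ (by linarith [h11 (x / s1)] : (0:ℝ) ≤ 1 - stdNormalCdf (x / s1))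
      (by linarith : 1 - stdNormalCdf (x / s1) ≤ 1 - stdNormalCdf (x / s2)) K
    linarith
  have hDpair : ∀ x : ℝ, 0 ≤ x →
      0 ≤ (stdNormalCdf (x / s1) ^ K - stdNormalCdf (x / s2) ^ K)
        + (stdNormalCdf (-x / s1) ^ K - stdNormalCdf (-x / s2) ^ K) := by
    intro x hx
    have e1 : stdNormalCdf (-x / s1) = 1 - stdNormalCdf (x / s1) := by
      rw [show -x / s1 = -(x / s1) by ring, cdf_neg_eq]
    have e2 : stdNormalCdf (-x / s2) = 1 - stdNormalCdf (x / s2) := by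
      rw [show -x / s2 = -(x / s2) by ring, cdf_neg_eq]
    rw [e1, e2]
    have h := sum_pow_mono K (cdf_half_le (div_nonneg hx hs2pos.le))
      (cdf_mono (hdivle x hx)) (h11 (x / s1))
    linarith
  -- I ≥ 0
  have hI : 0 ≤ ∫ u in Ioi (-zβ), g1 u := by
    by_cases hcz : zβ ≤ c
    · refine setIntegral_nonneg measurableSet_Ioi fun u hu => ?_
      have hx : (0:ℝ) ≤ u + c := by
        have := mem_Ioi.1 hu; linarith
      exact mul_nonneg (hDnonneg _ hx) (pdf_nonneg u)
    · push_neg at hcz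
      have hsub : Ioc (-zβ) (-c) ∪ Ioi (-c) = Ioi (-zβ) :=
        Ioc_union_Ioi_eq_Ioi (by linarith)
      rw [← hsub, setIntegral_union (Ioc_disjoint_Ioi le_rfl) measurableSet_Ioi
        (hg1int _) (hg1int _)]
      have hmp : MeasurePreserving (fun x : ℝ => -2*c - x) volume volume :=
        Measure.measurePreserving_sub_left volume (-2*c)
      have hemb : MeasurableEmbedding (fun x : ℝ => -2*c - x) :=
        (MeasurableEquiv.subLeft (-2*c)).measurableEmbedding
      have hpre : (fun x : ℝ => -2*c - x) ⁻¹' (Ioc (-zβ) (-c)) = Ico (-c) (zβ - 2*c) := by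
        rw [Set.preimage_const_sub_Ioc]
        rw [show -2*c - -c = -c by ring, show -2*c - -zβ = zβ - 2*c by ring]
      have hcv : ∫ u in Ioc (-zβ) (-c), g1 u = ∫ v in Ico (-c) (zβ - 2*c), g1 (-2*c - v) := by
        rw [← hmp.setIntegral_preimage_emb hemb g1 (Ioc (-zβ) (-c)), hpre]
      rw [hcv, integral_Ico_eq_integral_Ioo]
      have hIoosub : Ioo (-c) (zβ - 2*c) ⊆ Ioi (-c) := Ioo_subset_Ioi_self
      have hind : ∫ v in Ioo (-c) (zβ - 2*c), g1 (-2*c - v)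
          = ∫ v in Ioi (-c), (Ioo (-c) (zβ - 2*c)).indicator (fun v => g1 (-2*c - v)) v := by
        rw [setIntegral_indicator measurableSet_Ioo,
          Set.inter_eq_self_of_subset_right hIoosub]
      have hcompint : IntegrableOn (fun v => g1 (-2*c - v)) (Ico (-c) (zβ - 2*c)) volume := by
        have h := (hmp.integrableOn_comp_preimage hemb).2 (hg1int (Ioc (-zβ) (-c)))
        rw [hpre] at h
        exact h
      have hindint : Integrable
          ((Ioo (-c) (zβ - 2*c)).indicator (fun v => g1 (-2*c - v)))
          (volume.restrict (Ioi (-c))) :=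
        ((hcompint.mono_set Ioo_subset_Ico_self).integrable_indicator
          measurableSet_Ioo).integrableOn
      rw [hind, ← integral_add hindint (hg1int (Ioi (-c)))]
      refine setIntegral_nonneg measurableSet_Ioi fun v hv => ?_
      have hx : (0:ℝ) ≤ v + c := by
        have := mem_Ioi.1 hv; linarith
      by_cases hmem : v ∈ Ioo (-c) (zβ - 2*c)
      · rw [Set.indicator_of_mem hmem]
        simp only [hg1def]
        rw [show -2*c - v + c = -(v + c) by ring]
        rw [show -2*c - v = -(v + 2*c) by ring, pdf_neg]
        rw [show (-(v + c)) / s1 = -(v + c) / s1 by ring,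
          show (-(v + c)) / s2 = -(v + c) / s2 by ring]
        have hA := hDneg (v + c) hx
        have hB : stdNormalPdf (v + 2*c) ≤ stdNormalPdf v :=
          pdf_le (by nlinarith)
        have hC := hDpair (v + c) hx
        have hP := pdf_nonneg v
        nlinarith [mul_le_mul_of_nonpos_left hB hA]
      · rw [Set.indicator_of_notMem hmem]
        simpa using mul_nonneg (hDnonneg _ hx) (pdf_nonneg v)
  -- J > 0
  have hJ : 0 < ∫ u in Ioi (-zβ), g2 u := by
    rw [setIntegral_pos_iff_support_of_nonneg_ae
      (Filter.Eventually.of_forall fun v => mul_nonneg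
        (mul_nonneg (pow_nonneg (h01 _) K) (by linarith [h11 ((v + c) / s2)]))
        (pdf_nonneg v))
      (hg2int _)]
    have hsupp : Function.support g2 = univ := by
      ext v
      have : 0 < g2 v := mul_pos (mul_pos (pow_pos (cdf_pos _) K)
        (by linarith [cdf_lt_one ((v + c) / s2)])) (pdf_pos v)
      simp [Function.mem_support, this.ne']
    rw [hsupp, univ_inter, Real.volume_Ioi]
    exact ENNReal.zero_lt_top
  -- assemble
  have hkey : ∫ u in Ioi (-zβ), stdNormalCdf ((u + c) / s1) ^ K * stdNormalPdf u
      = (∫ u in Ioi (-zβ), g1 u) + ((∫ u in Ioi (-zβ), g2 u)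
        + ∫ u in Ioi (-zβ), stdNormalCdf ((u + c) / s2) ^ (K + 1) * stdNormalPdf u) := by
    have h23 : Integrable (fun u => g2 u
        + stdNormalCdf ((u + c) / s2) ^ (K + 1) * stdNormalPdf u)
        (volume.restrict (Ioi (-zβ))) := (hg2int (Ioi (-zβ))).add (hBint (Ioi (-zβ)))
    have e0 : ∫ u in Ioi (-zβ), stdNormalCdf ((u + c) / s1) ^ K * stdNormalPdf u
        = ∫ u in Ioi (-zβ), (g1 u + (g2 u
          + stdNormalCdf ((u + c) / s2) ^ (K + 1) * stdNormalPdf u)) := by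
      refine setIntegral_congr_fun measurableSet_Ioi fun u _ => ?_
      simp only [hg1def, hg2def]
      ring
    have e1 := integral_add (hg1int (Ioi (-zβ))) h23
    have e2 := integral_add (hg2int (Ioi (-zβ))) (hBint (Ioi (-zβ)))
    rw [e0, e1, e2]
  rw [hkey]
  linarith
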